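/- For every point q ∈ ℍℙ¹, the fiber π⁻¹(q) of the twistor projection is a twistor line: there exists a 2-dimensional complex subspace W ⊆ ℂ⁴ with j̃(W) = W such that π⁻¹(q) = ℙ(W). -/

import Mathlib

/-!
Under `piv`, `ℂ⁴ ≅ ℍ²` with multiplication by `ℂ ⊂ ℍ` acting on the left, and `j̃` becomes left
multiplication by `j`. Hence the fiber of `π` over `[p]` consists of the points of the left
`ℍ`-line `ℍ p`, viewed in `ℂ⁴`: a complex subspace stable under `j̃`, of complex dimension 2
since `w ↦ (w₀ + w₁ j) p` is an injective `ℂ`-linear parametrization of it.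
-/

/-- The conjugate-linear map `j̃ : ℂ⁴ → ℂ⁴`,
`j̃(z₀,z₁,z₂,z₃) = (−conj z₁, conj z₀, −conj z₃, conj z₂)`,
inducing the fixed-point-free anti-holomorphic involution `j` on `ℂℙ³`. -/
noncomputable def jt (z : Fin 4 → ℂ) : Fin 4 → ℂ :=
  ![-(starRingEnd ℂ) (z 1), (starRingEnd ℂ) (z 0), -(starRingEnd ℂ) (z 3), (starRingEnd ℂ) (z 2)]

lemma jt_ne_zero {z : Fin 4 → ℂ} (hz : z ≠ 0) : jt z ≠ 0 := by
  intro h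
  apply hz
  have h0 := congrFun h 0
  have h1 := congrFun h 1
  have h2 := congrFun h 2
  have h3 := congrFun h 3
  simp [jt] at h0 h1 h2 h3
  funext i
  fin_cases i <;> simp [h0, h1, h2, h3]

/-- The embedding `ℂ → ℍ` identifying `ℂ` with the subfield of `ℍ` spanned by `1` and `i`. -/
noncomputable def toQ (z : ℂ) : Quaternion ℝ := ⟨z.re, z.im, 0, 0⟩

/-- The imaginary unit `j ∈ ℍ`. -/
noncomputable def qJ : Quaternion ℝ := ⟨0, 0, 1, 0⟩

lemma toQ_add_mul (a b : ℂ) :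
    toQ a + toQ b * qJ = (⟨a.re, a.im, b.re, b.im⟩ : Quaternion ℝ) := by
  have h1 : ∀ z : ℂ, (toQ z).re = z.re := fun _ => rfl
  have h2 : ∀ z : ℂ, (toQ z).imI = z.im := fun _ => rfl
  have h3 : ∀ z : ℂ, (toQ z).imJ = 0 := fun _ => rfl
  have h4 : ∀ z : ℂ, (toQ z).imK = 0 := fun _ => rfl
  have h5 : qJ.re = 0 := rfl
  have h6 : qJ.imI = 0 := rfl
  have h7 : qJ.imJ = 1 := rfl
  have h8 : qJ.imK = 0 := rfl
  ext <;> simp [Quaternion.re_mul, Quaternion.imI_mul, Quaternion.imJ_mul, Quaternion.imK_mul,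
    h1, h2, h3, h4, h5, h6, h7, h8] <;> rfl

/-- The vector-level twistor projection `(z₀,z₁,z₂,z₃) ↦ (z₀+z₁j, z₂+z₃j) ∈ ℍ²`. -/
noncomputable def piv (z : Fin 4 → ℂ) : Fin 2 → Quaternion ℝ :=
  ![toQ (z 0) + toQ (z 1) * qJ, toQ (z 2) + toQ (z 3) * qJ]

lemma piv_ne_zero {z : Fin 4 → ℂ} (hz : z ≠ 0) : piv z ≠ 0 := by
  intro h
  apply hz
  have h0 := congrFun h 0
  have h1 := congrFun h 1
  simp only [piv, toQ_add_mul, Matrix.cons_val_zero, Matrix.cons_val_one, Matrix.head_cons,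
    Pi.zero_apply] at h0 h1
  rw [Quaternion.ext_iff] at h0 h1
  simp at h0 h1
  funext i
  fin_cases i <;> apply Complex.ext <;> simp [h0.1, h0.2.1, h0.2.2.1, h0.2.2.2,
    h1.1, h1.2.1, h1.2.2.1, h1.2.2.2] <;> rfl

/-- The twistor projection `π : ℂℙ³ → ℍℙ¹`, `π[z₀,z₁,z₂,z₃] = [z₀+z₁j, z₂+z₃j]`,
where `ℍℙ¹` is the projectivization of `ℍ²` as a left `ℍ`-module. -/
noncomputable def twistorProj (x : Projectivization ℂ (Fin 4 → ℂ)) :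
    Projectivization (Quaternion ℝ) (Fin 2 → Quaternion ℝ) :=
  Projectivization.mk (Quaternion ℝ) (piv x.rep) (piv_ne_zero x.rep_nonzero)

/-- The projectivization `ℙ(W) ⊆ ℂℙ³` of a complex subspace `W ⊆ ℂ⁴`:
the set of points of `ℂℙ³` whose representatives lie in `W`. -/
def projSet (W : Submodule ℂ (Fin 4 → ℂ)) : Set (Projectivization ℂ (Fin 4 → ℂ)) :=
  {x | x.rep ∈ W}

open ComplexConjugate

local notation "ℍ" => Quaternion ℝ

noncomputable def quat (a b : ℂ) : ℍ := toQ a + toQ b * qJ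

def quatFst (c : ℍ) : ℂ := ⟨c.re, c.imI⟩

def quatSnd (c : ℍ) : ℂ := ⟨c.imJ, c.imK⟩

@[simp] theorem quat_re (a b : ℂ) : (quat a b).re = a.re := by rw [quat, toQ_add_mul]
@[simp] theorem quat_imI (a b : ℂ) : (quat a b).imI = a.im := by rw [quat, toQ_add_mul]
@[simp] theorem quat_imJ (a b : ℂ) : (quat a b).imJ = b.re := by rw [quat, toQ_add_mul]
@[simp] theorem quat_imK (a b : ℂ) : (quat a b).imK = b.im := by rw [quat, toQ_add_mul]

theorem quat_inj {a b a' b' : ℂ} : quat a b = quat a' b' ↔ a = a' ∧ b = b' := by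
  simp [Quaternion.ext_iff, Complex.ext_iff, and_assoc]

theorem quat_quatFst_quatSnd (c : ℍ) : quat (quatFst c) (quatSnd c) = c := by
  ext <;> simp [quatFst, quatSnd]

theorem quat_mul_quat (a b c d : ℂ) :
    quat a b * quat c d = quat (a * c - b * conj d) (a * d + b * conj c) := by
  ext <;>
    simp [Quaternion.re_mul, Quaternion.imI_mul, Quaternion.imJ_mul, Quaternion.imK_mul] <;> ring

theorem qJ_eq_quat : qJ = quat 0 1 := by
  ext <;> simp [qJ]

theorem piv_eq (z : Fin 4 → ℂ) : piv z = ![quat (z 0) (z 1), quat (z 2) (z 3)] := rfl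

theorem piv_injective : Function.Injective piv := by
  intro z z' h
  have h0 := quat_inj.mp (congrFun h 0)
  have h1 := quat_inj.mp (congrFun h 1)
  ext i
  fin_cases i
  exacts [h0.1, h0.2, h1.1, h1.2]

theorem piv_jt (z : Fin 4 → ℂ) : piv (jt z) = qJ • piv z := by
  funext i
  fin_cases i <;> simp [piv_eq, jt, qJ_eq_quat, quat_mul_quat]

theorem jt_jt (z : Fin 4 → ℂ) : jt (jt z) = -z := by
  ext i
  fin_cases i <;> simp [jt]

/-- `w ↦ (w₀ + w₁ j) p`, read in `ℂ⁴` through `piv`. -/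
noncomputable def twistorParam (p : Fin 2 → ℍ) : (Fin 2 → ℂ) →ₗ[ℂ] (Fin 4 → ℂ) where
  toFun w :=
    ![w 0 * quatFst (p 0) - w 1 * conj (quatSnd (p 0)),
      w 0 * quatSnd (p 0) + w 1 * conj (quatFst (p 0)),
      w 0 * quatFst (p 1) - w 1 * conj (quatSnd (p 1)),
      w 0 * quatSnd (p 1) + w 1 * conj (quatFst (p 1))]
  map_add' w v := by ext i; fin_cases i <;> simp <;> ring
  map_smul' a w := by ext i; fin_cases i <;> simp <;> ring

theorem piv_twistorParam (p : Fin 2 → ℍ) (w : Fin 2 → ℂ) :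
    piv (twistorParam p w) = quat (w 0) (w 1) • p := by
  funext i
  fin_cases i <;>
    simp [piv_eq, twistorParam, ← quat_mul_quat, quat_quatFst_quatSnd]

theorem twistorParam_injective {p : Fin 2 → ℍ} (hp : p ≠ 0) :
    Function.Injective (twistorParam p) := by
  intro w v h
  have hq := smul_left_injective ℍ hp <| by
    simpa only [piv_twistorParam] using congrArg piv h
  obtain ⟨h0, h1⟩ := quat_inj.mp hq
  ext i
  fin_cases i
  exacts [h0, h1]

noncomputable def twistorLine (p : Fin 2 → ℍ) : Submodule ℂ (Fin 4 → ℂ) :=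
  LinearMap.range (twistorParam p)

theorem mem_twistorLine_iff {p : Fin 2 → ℍ} {z : Fin 4 → ℂ} :
    z ∈ twistorLine p ↔ piv z ∈ ℍ ∙ p := by
  rw [Submodule.mem_span_singleton]
  constructor
  · rintro ⟨w, rfl⟩
    exact ⟨_, (piv_twistorParam p w).symm⟩
  · rintro ⟨a, ha⟩
    refine ⟨![quatFst a, quatSnd a], piv_injective ?_⟩
    simp [piv_twistorParam, quat_quatFst_quatSnd, ha]

theorem finrank_twistorLine {p : Fin 2 → ℍ} (hp : p ≠ 0) :
    Module.finrank ℂ (twistorLine p) = 2 := by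
  rw [twistorLine, LinearMap.finrank_range_of_inj (twistorParam_injective hp)]
  simp

theorem jt_mem_twistorLine {p : Fin 2 → ℍ} {z : Fin 4 → ℂ} (hz : z ∈ twistorLine p) :
    jt z ∈ twistorLine p := by
  rw [mem_twistorLine_iff] at hz ⊢
  rw [piv_jt]
  exact Submodule.smul_mem _ qJ hz

theorem jt_image_twistorLine (p : Fin 2 → ℍ) :
    jt '' (twistorLine p : Set (Fin 4 → ℂ)) = twistorLine p := by
  refine Set.Subset.antisymm (Set.image_subset_iff.mpr fun z => jt_mem_twistorLine) fun z hz => ?_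
  exact ⟨jt (-z), jt_mem_twistorLine (neg_mem hz), by rw [jt_jt, neg_neg]⟩

theorem twistorProj_eq_iff (x : Projectivization ℂ (Fin 4 → ℂ))
    (q : Projectivization ℍ (Fin 2 → ℍ)) :
    twistorProj x = q ↔ piv x.rep ∈ ℍ ∙ q.rep := by
  conv_lhs => rw [← q.mk_rep]
  rw [twistorProj, Projectivization.mk_eq_mk_iff', Submodule.mem_span_singleton]

/-- Every fiber of the twistor projection `π : ℂℙ³ → ℍℙ¹` is a twistor line: for every
`q ∈ ℍℙ¹` there is a 2-dimensional complex subspace `W ⊆ ℂ⁴` with `j̃(W) = W` such that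
`π⁻¹(q) = ℙ(W)`. -/
theorem stmt5 (q : Projectivization (Quaternion ℝ) (Fin 2 → Quaternion ℝ)) :
    ∃ W : Submodule ℂ (Fin 4 → ℂ), Module.finrank ℂ W = 2 ∧
      jt '' (W : Set (Fin 4 → ℂ)) = (W : Set (Fin 4 → ℂ)) ∧
      twistorProj ⁻¹' {q} = projSet W := by
  refine ⟨twistorLine q.rep, finrank_twistorLine q.rep_nonzero, jt_image_twistorLine _, ?_⟩
  ext x
  exact (twistorProj_eq_iff x q).trans mem_twistorLine_iff.symm
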